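/- The vectors Tˣe (x ∈ ℤ) form an orthonormal system in H, i.e. ⟨Tˣe, Tʸe⟩ = 1 if x = y and 0 otherwise. Consequently, the vectors e₁ˣ = Tˣe and e₂ˣ = Tˣεe (x ∈ ℤ) together form an orthonormal system, with e₁ˣ ∈ π₊H and e₂ˣ ∈ π₋H for every x ∈ ℤ. -/

import Mathlib

/-!
On the `+1`-eigenspace of `σ` the walk operator `T = X + iσY` acts as `V`, on the
`-1`-eigenspace as `V⁻¹ = V*`, and both eigenspaces are invariant under `V`. Hence `Tˣ e = Vˣ e` and
`Tˣ (ε e) = V⁻ˣ (ε e) = ε (Vˣ e)`, since (QW2) says that `ε` conjugates `V` into `V⁻¹`.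
Unitarity of `V` and (QWR) make `(Vˣ e)` orthonormal, the unitary `ε` carries this over to
`(Tˣ (ε e))`, and the two families are orthogonal to each other as eigenvectors of the
self-adjoint `σ` for different eigenvalues.
-/

open ContinuousLinearMap
open scoped InnerProductSpace

theorem Set.EqOn.zpow_smul {G α : Type*} [Group G] [MulAction G α] {S : Set α} {t u : G}
    (hu : S.MapsTo (u • ·) S) (hu' : S.MapsTo (u⁻¹ • ·) S) (htu : S.EqOn (t • ·) (u • ·))
    (n : ℤ) : S.EqOn (t ^ n • ·) (u ^ n • ·) := by
  have hinv : S.EqOn (t⁻¹ • ·) (u⁻¹ • ·) := fun v hv => by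
    have : t • u⁻¹ • v = u • u⁻¹ • v := htu (hu' hv)
    rw [inv_smul_eq_iff, this, smul_inv_smul]
  induction n using Int.induction_on with
  | zero => exact fun v _ => by simp only [zpow_zero, one_smul]
  | succ n ih =>
    exact fun v hv => by simp only [zpow_add_one, mul_smul, htu hv, ih (hu hv)]
  | pred n ih =>
    exact fun v hv => by simp only [zpow_sub_one, mul_smul, hinv hv, ih (hu' hv)]

theorem semiconjBy_mul_of_mul_eq_mul_left_inv {M : Type*} [Monoid M] {a a' b : M}
    (ha : a' * a = 1) (h : a * b = b * a') : SemiconjBy (a * b) a a' := by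
  rw [SemiconjBy, ← mul_assoc a', ha, one_mul, h, mul_assoc, ha, mul_one]

theorem Unitary.semiconjBy_zpow {R : Type*} [Monoid R] [StarMul R] {a : R}
    {U U' : unitary R} (h : SemiconjBy a U U') (n : ℤ) :
    SemiconjBy a ↑(U ^ n) ↑(U' ^ n) := by
  simpa [← map_zpow] using SemiconjBy.units_zpow_right (x := toUnits U) (y := toUnits U') h n

theorem Unitary.commute_coe_inv {R : Type*} [Monoid R] [StarMul R] {a : R} {U : unitary R}
    (h : Commute a U) : Commute a ↑U⁻¹ :=
  zpow_neg_one U ▸ semiconjBy_zpow h (-1)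

theorem Commute.mapsTo_setOf_apply_eq_self {R M : Type*} [Semiring R] [TopologicalSpace M]
    [AddCommMonoid M] [Module R M] {σ A : M →L[R] M} (h : Commute σ A) :
    Set.MapsTo A {v | σ v = v} {v | σ v = v} := fun v (hv : σ v = v) => by
  change σ (A v) = A v
  rw [← mul_apply_eq_comp, h.eq, mul_apply_eq_comp, hv]

theorem Commute.mapsTo_setOf_apply_eq_neg {R M : Type*} [Semiring R] [TopologicalSpace M]
    [AddCommGroup M] [Module R M] {σ A : M →L[R] M} (h : Commute σ A) :
    Set.MapsTo A {v | σ v = -v} {v | σ v = -v} := fun v (hv : σ v = -v) => by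
  change σ (A v) = -A v
  rw [← mul_apply_eq_comp, h.eq, mul_apply_eq_comp, hv, map_neg]

section Projection

variable {E : Type*} [NormedAddCommGroup E] [NormedSpace ℂ E]

theorem half_smul_one_add_apply_eq_self_iff (σ : E →L[ℂ] E) (v : E) :
    ((2 : ℂ)⁻¹ • (1 + σ)) v = v ↔ σ v = v := by
  simp only [smul_apply, add_apply, one_apply_eq_self]
  constructor <;> intro h
  · linear_combination (norm := module) 2 • h
  · linear_combination (norm := module) (2 : ℂ)⁻¹ • h

theorem half_smul_one_sub_apply_eq_self_iff (σ : E →L[ℂ] E) (v : E) :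
    ((2 : ℂ)⁻¹ • (1 - σ)) v = v ↔ σ v = -v := by
  simp only [smul_apply, sub_apply, one_apply_eq_self]
  constructor <;> intro h
  · linear_combination (norm := module) -(2 : ℂ) • h
  · linear_combination (norm := module) -(2 : ℂ)⁻¹ • h

end Projection

section Hilbert

variable {H : Type*} [NormedAddCommGroup H] [InnerProductSpace ℂ H] [CompleteSpace H]

theorem ContinuousLinearMap.inner_eq_zero_of_apply_eq_self_of_apply_eq_neg {σ : H →L[ℂ] H}
    (hσ : adjoint σ = σ) {a b : H} (ha : σ a = a) (hb : σ b = -b) :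
    ⟪a, b⟫_ℂ = 0 := by
  have h := adjoint_inner_right σ a b
  rw [hσ, ha, hb, inner_neg_right] at h
  linear_combination -h / 2

namespace Unitary

theorem inner_zpow_apply_zpow_apply (U : unitary (H →L[ℂ] H)) (x y : ℤ) (a b : H) :
    ⟪(↑(U ^ x) : H →L[ℂ] H) a, (↑(U ^ y) : H →L[ℂ] H) b⟫_ℂ =
      ⟪(↑(U ^ (x - y)) : H →L[ℂ] H) a, b⟫_ℂ := by
  rw [show U ^ x = U ^ y * U ^ (x - y) by group, Submonoid.coe_mul, mul_apply_eq_comp,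
    inner_map_map]

theorem inner_zpow_apply_self_eq_zero (U : unitary (H →L[ℂ] H)) {e : H}
    (h : ∀ m : ℕ, 0 < m → ⟪((U : H →L[ℂ] H) ^ m) e, e⟫_ℂ = 0) {n : ℤ} (hn : n ≠ 0) :
    ⟪(↑(U ^ n) : H →L[ℂ] H) e, e⟫_ℂ = 0 := by
  obtain ⟨m, rfl | rfl⟩ := n.eq_nat_or_neg
  · rw [zpow_natCast, SubmonoidClass.coe_pow]
    exact h m (by omega)
  · have h' := inner_zpow_apply_zpow_apply U 0 m e e
    rw [zero_sub, zpow_zero, OneMemClass.coe_one, one_apply_eq_self, zpow_natCast,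
      SubmonoidClass.coe_pow, ← inner_conj_symm, h m (by omega), map_zero] at h'
    exact h'.symm

theorem orthonormal_zpow_apply (U : unitary (H →L[ℂ] H)) {e : H} (he : ‖e‖ = 1)
    (h : ∀ m : ℕ, 0 < m → ⟪((U : H →L[ℂ] H) ^ m) e, e⟫_ℂ = 0) :
    Orthonormal ℂ fun n : ℤ => (↑(U ^ n) : H →L[ℂ] H) e := by
  refine orthonormal_iff_ite.mpr fun x y => ?_
  rw [inner_zpow_apply_zpow_apply]
  split_ifs with hxy
  · simp [hxy, inner_self_eq_norm_sq_to_K, he]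
  · exact inner_zpow_apply_self_eq_zero U h (sub_ne_zero.mpr hxy)

theorem eqOn_zpow {S : Set H} {U : unitary (H →L[ℂ] H)} {T : (H →L[ℂ] H)ˣ}
    (hU : S.MapsTo ⇑(U : H →L[ℂ] H) S) (hU' : S.MapsTo ⇑(↑U⁻¹ : H →L[ℂ] H) S)
    (hTU : S.EqOn ⇑(T : H →L[ℂ] H) ⇑(U : H →L[ℂ] H)) (n : ℤ) :
    S.EqOn ⇑(↑(T ^ n) : H →L[ℂ] H) ⇑(↑(U ^ n) : H →L[ℂ] H) := by
  have := Set.EqOn.zpow_smul (t := T) (u := toUnits U) hU hU' hTU n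
  rw [← map_zpow] at this
  exact this

end Unitary

/-- The operator `T = X + iσY` of the quantum walk, `X` and `Y` being the real and imaginary
parts of `V`. -/
noncomputable def walkOperator (σ V : H →L[ℂ] H) : H →L[ℂ] H :=
  (2 : ℂ)⁻¹ • (V + adjoint V) + Complex.I • (σ ∘L ((2 * Complex.I)⁻¹ • (V - adjoint V)))

theorem walkOperator_apply (σ V : H →L[ℂ] H) (v : H) :
    walkOperator σ V v = (2 : ℂ)⁻¹ • (V v + adjoint V v + σ (V v) - σ (adjoint V v)) := by
  have h : Complex.I * (2 * Complex.I)⁻¹ = 2⁻¹ := by field_simp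
  simp only [walkOperator, add_apply, smul_apply, comp_apply, sub_apply, map_smul, map_sub,
    smul_smul, h]
  module

variable {σ : H →L[ℂ] H} {U : unitary (H →L[ℂ] H)}

theorem walkOperator_eqOn_fixed (hσU : Commute σ (U : H →L[ℂ] H)) :
    {v | σ v = v}.EqOn ⇑(walkOperator σ U) ⇑(U : H →L[ℂ] H) := fun v hv => by
  have h : σ ((U : H →L[ℂ] H) v) = (U : H →L[ℂ] H) v :=
    hσU.mapsTo_setOf_apply_eq_self hv
  have h' : σ (adjoint (U : H →L[ℂ] H) v) = adjoint (U : H →L[ℂ] H) v :=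
    (Unitary.commute_coe_inv hσU).mapsTo_setOf_apply_eq_self hv
  rw [walkOperator_apply, h, h']
  module

theorem walkOperator_eqOn_negated (hσU : Commute σ (U : H →L[ℂ] H)) :
    {v | σ v = -v}.EqOn ⇑(walkOperator σ U) ⇑(↑U⁻¹ : H →L[ℂ] H) := fun v hv => by
  have h : σ ((U : H →L[ℂ] H) v) = -(U : H →L[ℂ] H) v :=
    hσU.mapsTo_setOf_apply_eq_neg hv
  have h' : σ (adjoint (U : H →L[ℂ] H) v) = -adjoint (U : H →L[ℂ] H) v :=
    (Unitary.commute_coe_inv hσU).mapsTo_setOf_apply_eq_neg hv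
  change _ = adjoint (U : H →L[ℂ] H) v
  rw [walkOperator_apply, h, h']
  module

variable {T : (H →L[ℂ] H)ˣ} {v : H}

theorem walkOperator_zpow_apply_of_fixed (hσU : Commute σ (U : H →L[ℂ] H))
    (hT : (T : H →L[ℂ] H) = walkOperator σ U) (hv : σ v = v) (n : ℤ) :
    (↑(T ^ n) : H →L[ℂ] H) v = (↑(U ^ n) : H →L[ℂ] H) v :=
  Unitary.eqOn_zpow hσU.mapsTo_setOf_apply_eq_self
    (Unitary.commute_coe_inv hσU).mapsTo_setOf_apply_eq_self
    (hT ▸ walkOperator_eqOn_fixed hσU) n hv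

theorem walkOperator_zpow_apply_of_negated (hσU : Commute σ (U : H →L[ℂ] H))
    (hT : (T : H →L[ℂ] H) = walkOperator σ U) (hv : σ v = -v) (n : ℤ) :
    (↑(T ^ n) : H →L[ℂ] H) v = (↑(U⁻¹ ^ n) : H →L[ℂ] H) v :=
  Unitary.eqOn_zpow (Unitary.commute_coe_inv hσU).mapsTo_setOf_apply_eq_neg
    (by rw [inv_inv]; exact hσU.mapsTo_setOf_apply_eq_neg)
    (hT ▸ walkOperator_eqOn_negated hσU) n hv

end Hilbert

theorem qw_orthonormal_system {H : Type*} [NormedAddCommGroup H] [InnerProductSpace ℂ H]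
    [CompleteSpace H]
    (V W σ X Y T Pp Pm ε : H →L[ℂ] H)
    (hVu : adjoint V ∘L V = 1 ∧ V ∘L adjoint V = 1)
    (hWu : adjoint W ∘L W = 1 ∧ W ∘L adjoint W = 1)
    (hQW2 : V ∘L W = W ∘L adjoint V)
    (hQW3W : σ ∘L W + W ∘L σ = 0)
    (hQW3V : σ ∘L V - V ∘L σ = 0)
    (hQW4 : adjoint σ = σ)
    (hX : X = (2 : ℂ)⁻¹ • (V + adjoint V))
    (hY : Y = (2 * Complex.I)⁻¹ • (V - adjoint V))
    (hT : T = X + Complex.I • (σ ∘L Y))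
    (hPp : Pp = (2 : ℂ)⁻¹ • (1 + σ))
    (hPm : Pm = (2 : ℂ)⁻¹ • (1 - σ))
    (hε : ε = V ∘L W)
    (e : H) (he : ‖e‖ = 1) (hePp : Pp e = e)
    (horth : ∀ m : ℕ, 0 < m → (inner ℂ ((V ^ m) e) e : ℂ) = 0)
    (Tu : (H →L[ℂ] H)ˣ) (hTu : (Tu : H →L[ℂ] H) = T)
    (e1 e2 : ℤ → H)
    (he1 : ∀ x : ℤ, e1 x = ((Tu ^ x : (H →L[ℂ] H)ˣ) : H →L[ℂ] H) e)
    (he2 : ∀ x : ℤ, e2 x = ((Tu ^ x : (H →L[ℂ] H)ˣ) : H →L[ℂ] H) (ε e)) :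
    (∀ x y : ℤ, (inner ℂ (((Tu ^ x : (H →L[ℂ] H)ˣ) : H →L[ℂ] H) e)
        (((Tu ^ y : (H →L[ℂ] H)ˣ) : H →L[ℂ] H) e) : ℂ) = if x = y then 1 else 0) ∧
    (∀ x : ℤ, Pp (e1 x) = e1 x) ∧
    (∀ x : ℤ, Pm (e2 x) = e2 x) ∧
    (∀ x y : ℤ, (inner ℂ (e1 x) (e1 y) : ℂ) = if x = y then 1 else 0) ∧
    (∀ x y : ℤ, (inner ℂ (e2 x) (e2 y) : ℂ) = if x = y then 1 else 0) ∧
    (∀ x y : ℤ, (inner ℂ (e1 x) (e2 y) : ℂ) = 0) := by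
  subst hT hX hY hPp hPm hε
  let U : unitary (H →L[ℂ] H) := ⟨V, hVu⟩
  let εu : unitary (H →L[ℂ] H) := U * ⟨W, hWu⟩
  have hσU : Commute σ (U : H →L[ℂ] H) := sub_eq_zero.mp hQW3V
  have hεU : SemiconjBy (εu : H →L[ℂ] H) U ↑U⁻¹ :=
    semiconjBy_mul_of_mul_eq_mul_left_inv hVu.1 hQW2
  have hσe : σ e = e := (half_smul_one_add_apply_eq_self_iff σ e).mp hePp
  have hσεe : σ ((εu : H →L[ℂ] H) e) = -(εu : H →L[ℂ] H) e := by
    have hσW : σ (W e) = -W (σ e) := eq_neg_of_add_eq_zero_left congr($hQW3W e)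
    change σ (V (W e)) = -V (W e)
    rw [← mul_apply_eq_comp, hσU.eq, mul_apply_eq_comp, hσW, hσe, map_neg]
  have hT : (Tu : H →L[ℂ] H) = walkOperator σ U := hTu
  have he1U : ∀ x : ℤ, e1 x = (↑(U ^ x) : H →L[ℂ] H) e := fun x =>
    (he1 x).trans (walkOperator_zpow_apply_of_fixed hσU hT hσe x)
  have he2U : ∀ x : ℤ, e2 x = (↑(U⁻¹ ^ x) : H →L[ℂ] H) ((εu : H →L[ℂ] H) e) := fun x =>
    (he2 x).trans (walkOperator_zpow_apply_of_negated hσU hT hσεe x)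
  have hσe1 : ∀ x : ℤ, σ (e1 x) = e1 x := fun x =>
    (he1U x).symm ▸ Commute.mapsTo_setOf_apply_eq_self (Unitary.semiconjBy_zpow hσU x) hσe
  have hσe2 : ∀ x : ℤ, σ (e2 x) = -e2 x := fun x => (he2U x).symm ▸
    Commute.mapsTo_setOf_apply_eq_neg
      (Unitary.semiconjBy_zpow (Unitary.commute_coe_inv hσU) x) hσεe
  have hon1 : Orthonormal ℂ e1 := funext he1U ▸ Unitary.orthonormal_zpow_apply U he horth
  have hon2 : Orthonormal ℂ e2 := by
    have : e2 = Unitary.linearIsometryEquiv εu ∘ e1 := funext fun x => by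
      rw [he2U, Function.comp_apply, he1U]
      exact congr($(Unitary.semiconjBy_zpow hεU x) e).symm
    exact this ▸ hon1.comp_linearIsometryEquiv _
  rw [orthonormal_iff_ite] at hon1 hon2
  refine ⟨fun x y => ?_, fun x => ?_, fun x => ?_, hon1, hon2, fun x y => ?_⟩
  · rw [← he1, ← he1]; exact hon1 x y
  · exact (half_smul_one_add_apply_eq_self_iff σ _).mpr (hσe1 x)
  · exact (half_smul_one_sub_apply_eq_self_iff σ _).mpr (hσe2 x)
  · exact inner_eq_zero_of_apply_eq_self_of_apply_eq_neg hQW4 (hσe1 x) (hσe2 y)
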